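/- For all positive reals ξ, ρ, τ and every r ≥ 0, the number n₁ of integers k ≥ 1 with λ_k^{(1)} ≤ r satisfies sqrt(r)/sqrt(ξ) − 1 < n₁ ≤ sqrt(r)/sqrt(ξ) + sqrt(ρ/(ξτ)). -/

import Mathlib

noncomputable def rk (ξ ρ τ : ℝ) (k : ℕ) : ℝ :=
  Real.sqrt (ξ * ρ / τ * (k : ℝ) ^ 2 + ((ρ + 1) / (2 * τ)) ^ 2)

noncomputable def lam1 (ξ ρ τ : ℝ) (k : ℕ) : ℝ :=
  ξ * (k : ℝ) ^ 2 + (ρ + 1) / (2 * τ) - rk ξ ρ τ k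

/-!
The square root in `lam1` is squeezed between `(ρ + 1) / (2τ)` and `√(ξρ/τ) k + (ρ + 1) / (2τ)`,
so `ξ k (k - √(ρ/(ξτ))) ≤ λ_k ≤ ξ k²`. Hence every `k` with `1 ≤ k ≤ √r / √ξ` is counted and
every counted `k` satisfies `k ≤ √r / √ξ + √(ρ/(ξτ))`: the counted set lies between two initial
segments `{1, …, m}` of `ℕ`, whose cardinalities are floors of these two bounds.
-/

section Bounds

variable {ξ ρ τ : ℝ}

lemma le_rk (hξ : 0 ≤ ξ) (hρ : 0 ≤ ρ) (hτ : 0 ≤ τ) (k : ℕ) :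
    (ρ + 1) / (2 * τ) ≤ rk ξ ρ τ k :=
  Real.le_sqrt_of_sq_le (le_add_of_nonneg_left (by positivity))

lemma rk_le (hξ : 0 < ξ) (hρ : 0 ≤ ρ) (hτ : 0 < τ) (k : ℕ) :
    rk ξ ρ τ k ≤ ξ * Real.sqrt (ρ / (ξ * τ)) * k + (ρ + 1) / (2 * τ) := by
  have hb : Real.sqrt (ρ / (ξ * τ)) ^ 2 = ρ / (ξ * τ) := Real.sq_sqrt (by positivity)
  have hξρτ : ξ * ρ / τ = ξ ^ 2 * Real.sqrt (ρ / (ξ * τ)) ^ 2 := by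
    rw [hb]; field_simp
  have hcross : 0 ≤ ξ * Real.sqrt (ρ / (ξ * τ)) * k * ((ρ + 1) / (2 * τ)) := by positivity
  rw [rk, Real.sqrt_le_left (by positivity), hξρτ]
  nlinarith [hcross]

lemma lam1_le (hξ : 0 ≤ ξ) (hρ : 0 ≤ ρ) (hτ : 0 ≤ τ) (k : ℕ) :
    lam1 ξ ρ τ k ≤ ξ * (k : ℝ) ^ 2 := by
  rw [lam1]
  linarith [le_rk hξ hρ hτ k]

lemma le_lam1 (hξ : 0 < ξ) (hρ : 0 ≤ ρ) (hτ : 0 < τ) (k : ℕ) :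
    ξ * (k * (k - Real.sqrt (ρ / (ξ * τ)))) ≤ lam1 ξ ρ τ k := by
  rw [lam1]
  linarith [rk_le hξ hρ hτ k]

end Bounds

section RealInequalities

variable {a b c x : ℝ}

lemma mul_sq_le_of_le_sqrt_div (ha : 0 ≤ a) (hc : 0 < c) (hx : 0 ≤ x)
    (h : x ≤ Real.sqrt a / Real.sqrt c) : c * x ^ 2 ≤ a := by
  rw [← Real.sqrt_div' a hc.le, Real.le_sqrt hx (by positivity)] at h
  exact (le_div_iff₀' hc).mp h

lemma le_sqrt_div_add_of_mul_sub_le (ha : 0 ≤ a) (hc : 0 < c) (hb : 0 ≤ b)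
    (h : c * (x * (x - b)) ≤ a) : x ≤ Real.sqrt a / Real.sqrt c + b := by
  set s := Real.sqrt a / Real.sqrt c
  have hs : 0 ≤ s := by positivity
  have hcs : c * s ^ 2 = a := by
    rw [div_pow, Real.sq_sqrt ha, Real.sq_sqrt hc.le]; field_simp
  by_contra! hx
  have hss : s * s < x * (x - b) := mul_lt_mul'' (by linarith) (by linarith) hs hs
  nlinarith [mul_lt_mul_of_pos_left hss hc]

end RealInequalities

theorem stmt_11 (ξ ρ τ : ℝ) (hξ : 0 < ξ) (hρ : 0 < ρ) (hτ : 0 < τ)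
    (r : ℝ) (hr : 0 ≤ r) :
    Real.sqrt r / Real.sqrt ξ - 1
        < (({k : ℕ | 1 ≤ k ∧ lam1 ξ ρ τ k ≤ r}).ncard : ℝ) ∧
    (({k : ℕ | 1 ≤ k ∧ lam1 ξ ρ τ k ≤ r}).ncard : ℝ)
        ≤ Real.sqrt r / Real.sqrt ξ + Real.sqrt (ρ / (ξ * τ)) := by
  set S := {k : ℕ | 1 ≤ k ∧ lam1 ξ ρ τ k ≤ r}
  set s := Real.sqrt r / Real.sqrt ξ
  set b := Real.sqrt (ρ / (ξ * τ))
  have hs : 0 ≤ s := by positivity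
  have hlower : Set.Icc 1 ⌊s⌋₊ ⊆ S := fun k ⟨hk1, hk⟩ =>
    ⟨hk1, (lam1_le hξ.le hρ.le hτ.le k).trans <| mul_sq_le_of_le_sqrt_div hr hξ k.cast_nonneg <|
      (Nat.cast_le.mpr hk).trans (Nat.floor_le hs)⟩
  have hupper : S ⊆ Set.Icc 1 ⌊s + b⌋₊ := fun k ⟨hk1, hk⟩ =>
    ⟨hk1, Nat.le_floor <| le_sqrt_div_add_of_mul_sub_le hr hξ (Real.sqrt_nonneg _) <|
      (le_lam1 hξ hρ.le hτ k).trans hk⟩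
  have hcard_lower := Set.ncard_le_ncard hlower ((Set.finite_Icc _ _).subset hupper)
  have hcard_upper := Set.ncard_le_ncard hupper
  simp only [Set.ncard_Icc_nat, Nat.add_sub_cancel] at hcard_lower hcard_upper
  constructor
  · linarith [Nat.sub_one_lt_floor s, (Nat.cast_le (α := ℝ)).mpr hcard_lower]
  · linarith [Nat.floor_le (add_nonneg hs (Real.sqrt_nonneg (ρ / (ξ * τ)))),
      (Nat.cast_le (α := ℝ)).mpr hcard_upper]
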